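/- Let σ > 0, γ ∈ [0,1], 0 < Δ_∞ ≤ Δ_2, and let α ≥ 2 be an integer. Let g ∈ ℝ^d satisfy ‖g‖_2 ≤ Δ_2 and ‖g‖_∞ ≤ Δ_∞. Then the Rényi divergence of order α between the product measure ⊗_{j=1}^d ( γ·N(g_j, σ²) + (1−γ)·N(0, σ²) ) and the product measure ⊗_{j=1}^d N(0, σ²) is at most ( (Δ_2²/Δ_∞²) / (α−1) ) · log( Σ_{ℓ=0}^{α} C(α,ℓ) · (1−γ)^{α−ℓ} · γ^ℓ · exp( ℓ(ℓ−1)·Δ_∞² / (2σ²) ) ). -/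

import Mathlib

open MeasureTheory ProbabilityTheory Real
open scoped ENNReal NNReal Classical

/-- Rényi divergence of order `a` between measures `μ` and `ν`:
`(a-1)⁻¹ * log ∫ (dμ/dν)^a dν`, set to `⊤` when `μ` is not absolutely
continuous with respect to `ν`. -/
noncomputable def renyiDiv {E : Type*} [MeasurableSpace E] (a : ℝ) (μ ν : Measure E) : EReal :=
  if μ ≪ ν then (((a - 1)⁻¹ : ℝ) : EReal) * ENNReal.log (∫⁻ x, (μ.rnDeriv ν x) ^ a ∂ν)
  else ⊤

/-- Bernoulli(γ) distribution on ℝ, supported on {0, 1}. -/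
noncomputable def bern (γ : ℝ) : Measure ℝ :=
  ENNReal.ofReal γ • Measure.dirac 1 + ENNReal.ofReal (1 - γ) • Measure.dirac 0

/-!
Under `N(0, v)` the likelihood ratio of `N(m, v)` is `r = exp ((m x - m² / 2) / v)`, so each factor
of the product has density `γ r + (1 - γ)`. Expanding its `α`-th power binomially, the Gaussian
moment generating function gives `∫ r ^ ℓ = exp (ℓ (ℓ - 1) m² / (2 v))`, hence the `α`-th moment
of the density of the product is `∏ⱼ M (gⱼ²)`, where `M u` is the sum inside the logarithm with
`Δ∞²` replaced by `u`. Jensen's inequality for the concave `x ↦ x ^ θ` with the binomial weights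
gives `M (θ u) ≤ M u ^ θ` for `θ ∈ [0, 1]`, so `log M (gⱼ²) ≤ (gⱼ² / Δ∞²) log M (Δ∞²)`; summing
over `j` and using `∑ gⱼ² ≤ Δ₂²` ends the proof.
-/

open Finset

section Product

variable {ι : Type*} [Fintype ι] {Ω : ι → Type*} [∀ i, MeasurableSpace (Ω i)]
  {μ : ∀ i, Measure (Ω i)} [∀ i, IsProbabilityMeasure (μ i)]

theorem lintegral_pi_prod_eq_prod {f : ∀ i, Ω i → ℝ≥0∞} (hf : ∀ i, Measurable (f i)) :
    ∫⁻ x, ∏ i, f i (x i) ∂Measure.pi μ = ∏ i, ∫⁻ y, f i y ∂μ i := by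
  rw [lintegral_prod_eq_prod_lintegral_of_indepFun univ _
    (iIndepFun_pi fun i => (hf i).aemeasurable) fun i => (hf i).comp (measurable_pi_apply i)]
  exact prod_congr rfl fun i _ => (measurePreserving_eval μ i).lintegral_comp (hf i)

theorem Measure.pi_withDensity {f : ∀ i, Ω i → ℝ≥0∞} (hf : ∀ i, Measurable (f i))
    [∀ i, SigmaFinite ((μ i).withDensity (f i))] :
    Measure.pi (fun i => (μ i).withDensity (f i)) =
      (Measure.pi μ).withDensity fun x => ∏ i, f i (x i) := by
  refine Measure.pi_eq (μ := fun i => (μ i).withDensity (f i)) fun s hs => ?_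
  have hS := MeasurableSet.univ_pi hs
  have hind : (Set.univ.pi s).indicator (fun x => ∏ i, f i (x i)) =
      fun x => ∏ i, (s i).indicator (f i) (x i) := by
    ext x
    by_cases hx : x ∈ Set.univ.pi s
    · rw [Set.indicator_of_mem hx]
      exact prod_congr rfl fun i _ => (Set.indicator_of_mem (hx i (Set.mem_univ i)) _).symm
    · obtain ⟨i, hi⟩ : ∃ i, x i ∉ s i := by simpa using hx
      rw [Set.indicator_of_notMem hx, eq_comm]
      exact prod_eq_zero (mem_univ i) (Set.indicator_of_notMem hi _)
  rw [withDensity_apply _ hS, ← lintegral_indicator hS, hind,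
    lintegral_pi_prod_eq_prod fun i => (hf i).indicator (hs i)]
  exact prod_congr rfl fun i _ => by rw [lintegral_indicator (hs i), withDensity_apply _ (hs i)]

end Product

theorem renyiDiv_withDensity {E : Type*} [MeasurableSpace E] (a : ℝ) (ν : Measure E)
    [SigmaFinite ν] {f : E → ℝ≥0∞} (hf : Measurable f) :
    renyiDiv a (ν.withDensity f) ν =
      (((a - 1)⁻¹ : ℝ) : EReal) * ENNReal.log (∫⁻ x, f x ^ a ∂ν) := by
  rw [renyiDiv, if_pos (withDensity_absolutelyContinuous ν f),
    lintegral_congr_ae ((Measure.rnDeriv_withDensity ν hf).mono fun x hx => by rw [hx])]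

section Moment

noncomputable def sparsifiedGaussianMoment (v γ : ℝ) (α : ℕ) (u : ℝ) : ℝ :=
  ∑ ℓ ∈ range (α + 1), (α.choose ℓ : ℝ) * (1 - γ) ^ (α - ℓ) * γ ^ ℓ *
    exp ((ℓ : ℝ) * ((ℓ : ℝ) - 1) * u / (2 * v))

theorem sum_binomial_weights_eq_one (γ : ℝ) (α : ℕ) :
    ∑ ℓ ∈ range (α + 1), (α.choose ℓ : ℝ) * (1 - γ) ^ (α - ℓ) * γ ^ ℓ = 1 := by
  have := add_pow γ (1 - γ) α
  rw [add_sub_cancel, one_pow] at this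
  exact (sum_congr rfl fun ℓ _ => by ring).trans this.symm

variable {v γ : ℝ} {α : ℕ}

theorem one_le_sparsifiedGaussianMoment (hγ0 : 0 ≤ γ) (hγ1 : γ ≤ 1) (hv : 0 ≤ v) {u : ℝ}
    (hu : 0 ≤ u) : 1 ≤ sparsifiedGaussianMoment v γ α u := by
  have : 0 ≤ 1 - γ := by linarith
  rw [← sum_binomial_weights_eq_one γ α]
  refine sum_le_sum fun ℓ _ => le_mul_of_one_le_right (by positivity) (one_le_exp ?_)
  have hℓ : 0 ≤ (ℓ : ℝ) * ((ℓ : ℝ) - 1) := by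
    rcases ℓ with _ | ℓ
    · simp
    · push_cast; nlinarith
  positivity

theorem sparsifiedGaussianMoment_mul_le_rpow (hγ0 : 0 ≤ γ) (hγ1 : γ ≤ 1) {θ : ℝ} (hθ0 : 0 ≤ θ)
    (hθ1 : θ ≤ 1) (s : ℝ) :
    sparsifiedGaussianMoment v γ α (θ * s) ≤ sparsifiedGaussianMoment v γ α s ^ θ := by
  have : 0 ≤ 1 - γ := by linarith
  have hexp (ℓ : ℕ) : exp ((ℓ : ℝ) * ((ℓ : ℝ) - 1) * (θ * s) / (2 * v)) =
      exp ((ℓ : ℝ) * ((ℓ : ℝ) - 1) * s / (2 * v)) ^ θ := by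
    rw [← exp_mul]
    ring_nf
  simp_rw [sparsifiedGaussianMoment, hexp]
  simpa using (concaveOn_rpow hθ0 hθ1).le_map_sum (fun ℓ _ => by positivity)
    (sum_binomial_weights_eq_one γ α) fun ℓ _ => (exp_pos _).le

theorem log_sparsifiedGaussianMoment_le (hγ0 : 0 ≤ γ) (hγ1 : γ ≤ 1) (hv : 0 ≤ v) {t s : ℝ}
    (ht : 0 ≤ t) (hts : t ≤ s) (hs : 0 < s) :
    log (sparsifiedGaussianMoment v γ α t) ≤ t / s * log (sparsifiedGaussianMoment v γ α s) := by
  have hMt := one_le_sparsifiedGaussianMoment (α := α) hγ0 hγ1 hv ht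
  have hMs := one_le_sparsifiedGaussianMoment (α := α) hγ0 hγ1 hv (ht.trans hts)
  have hle := sparsifiedGaussianMoment_mul_le_rpow (v := v) (α := α) hγ0 hγ1
    (div_nonneg ht hs.le) ((div_le_one hs).2 hts) s
  rw [div_mul_cancel₀ t hs.ne'] at hle
  rw [← log_rpow (by linarith)]
  exact log_le_log (by linarith) hle

theorem log_prod_sparsifiedGaussianMoment_le {ι : Type*} [Fintype ι] (hγ0 : 0 ≤ γ) (hγ1 : γ ≤ 1)
    (hv : 0 ≤ v) {g : ι → ℝ} {Δ₂ Δ : ℝ} (hΔ : 0 < Δ) (hg : ∀ j, |g j| ≤ Δ)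
    (hg2 : ∑ j, g j ^ 2 ≤ Δ₂ ^ 2) :
    log (∏ j, sparsifiedGaussianMoment v γ α (g j ^ 2)) ≤
      Δ₂ ^ 2 / Δ ^ 2 * log (sparsifiedGaussianMoment v γ α (Δ ^ 2)) := by
  have hM (u : ℝ) (hu : 0 ≤ u) := one_le_sparsifiedGaussianMoment (α := α) hγ0 hγ1 hv hu
  rw [log_prod fun j _ => (one_pos.trans_le (hM _ (sq_nonneg (g j)))).ne']
  calc ∑ j, log (sparsifiedGaussianMoment v γ α (g j ^ 2))
      ≤ ∑ j, g j ^ 2 / Δ ^ 2 * log (sparsifiedGaussianMoment v γ α (Δ ^ 2)) :=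
        sum_le_sum fun j _ => log_sparsifiedGaussianMoment_le hγ0 hγ1 hv (sq_nonneg _)
          (sq_le_sq.2 ((hg j).trans (le_abs_self Δ))) (by positivity)
    _ = (∑ j, g j ^ 2) / Δ ^ 2 * log (sparsifiedGaussianMoment v γ α (Δ ^ 2)) := by
        rw [← sum_mul, ← sum_div]
    _ ≤ _ := by
        gcongr
        exact log_nonneg (hM _ (sq_nonneg Δ))

end Moment

section Gaussian

variable {v : ℝ≥0}

noncomputable def gaussianLikelihoodRatio (v : ℝ≥0) (m x : ℝ) : ℝ := exp ((m * x - m ^ 2 / 2) / v)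

@[fun_prop]
theorem measurable_gaussianLikelihoodRatio (v : ℝ≥0) (m : ℝ) :
    Measurable (gaussianLikelihoodRatio v m) := by
  unfold gaussianLikelihoodRatio
  fun_prop

theorem gaussianPDFReal_zero_mul_gaussianLikelihoodRatio (hv : v ≠ 0) (m x : ℝ) :
    gaussianPDFReal 0 v x * gaussianLikelihoodRatio v m x = gaussianPDFReal m v x := by
  have hv' : (v : ℝ) ≠ 0 := mod_cast hv
  rw [gaussianPDFReal, gaussianPDFReal, gaussianLikelihoodRatio, mul_assoc, ← exp_add]
  congr 2
  field_simp
  ring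

theorem gaussianReal_eq_withDensity_gaussianLikelihoodRatio (hv : v ≠ 0) (m : ℝ) :
    gaussianReal m v =
      (gaussianReal 0 v).withDensity fun x => ENNReal.ofReal (gaussianLikelihoodRatio v m x) := by
  rw [gaussianReal_of_var_ne_zero _ hv, gaussianReal_of_var_ne_zero _ hv,
    ← withDensity_mul _ (measurable_gaussianPDF _ _) (by fun_prop)]
  congr 1
  ext x
  rw [Pi.mul_apply, gaussianPDF, gaussianPDF, ← ENNReal.ofReal_mul (gaussianPDFReal_nonneg _ _ _),
    gaussianPDFReal_zero_mul_gaussianLikelihoodRatio hv]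

theorem mixture_gaussianReal_eq_withDensity (hv : v ≠ 0) {γ : ℝ} (hγ0 : 0 ≤ γ) (hγ1 : γ ≤ 1)
    (m : ℝ) :
    ENNReal.ofReal γ • gaussianReal m v + ENNReal.ofReal (1 - γ) • gaussianReal 0 v =
      (gaussianReal 0 v).withDensity
        fun x => ENNReal.ofReal (γ * gaussianLikelihoodRatio v m x + (1 - γ)) := by
  have hdensity : (fun x => ENNReal.ofReal (γ * gaussianLikelihoodRatio v m x + (1 - γ))) =
      ENNReal.ofReal γ • (fun x => ENNReal.ofReal (gaussianLikelihoodRatio v m x)) +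
        fun _ => ENNReal.ofReal (1 - γ) := by
    ext x
    rw [ENNReal.ofReal_add (by unfold gaussianLikelihoodRatio; positivity) (by linarith),
      ENNReal.ofReal_mul hγ0]
    rfl
  rw [hdensity, withDensity_add_left (by fun_prop), withDensity_smul _ (by fun_prop),
    withDensity_const, ← gaussianReal_eq_withDensity_gaussianLikelihoodRatio hv]

theorem gaussianLikelihoodRatio_pow (hv : v ≠ 0) (m x : ℝ) (ℓ : ℕ) :
    gaussianLikelihoodRatio v m x ^ ℓ = exp (ℓ * m / v * x) * exp (-(ℓ * m ^ 2 / (2 * v))) := by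
  have hv' : (v : ℝ) ≠ 0 := mod_cast hv
  rw [gaussianLikelihoodRatio, ← exp_nat_mul, ← exp_add]
  congr 1
  field_simp
  ring

theorem integrable_gaussianLikelihoodRatio_pow (hv : v ≠ 0) (m : ℝ) (ℓ : ℕ) :
    Integrable (fun x => gaussianLikelihoodRatio v m x ^ ℓ) (gaussianReal 0 v) := by
  simp_rw [gaussianLikelihoodRatio_pow hv]
  exact (integrable_exp_mul_gaussianReal _).mul_const _

theorem integral_gaussianLikelihoodRatio_pow (hv : v ≠ 0) (m : ℝ) (ℓ : ℕ) :
    ∫ x, gaussianLikelihoodRatio v m x ^ ℓ ∂gaussianReal 0 v =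
      exp (ℓ * (ℓ - 1) * m ^ 2 / (2 * v)) := by
  have hv' : (v : ℝ) ≠ 0 := mod_cast hv
  have hmgf := congrFun (mgf_fun_id_gaussianReal (μ := 0) (v := v)) (ℓ * m / v)
  rw [mgf] at hmgf
  simp_rw [gaussianLikelihoodRatio_pow hv]
  rw [integral_mul_const, hmgf, ← exp_add]
  congr 1
  field_simp
  ring

theorem integrable_sparsifiedLikelihoodRatio_pow (hv : v ≠ 0) (γ m : ℝ) (α : ℕ) :
    Integrable (fun x => (γ * gaussianLikelihoodRatio v m x + (1 - γ)) ^ α)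
      (gaussianReal 0 v) := by
  simp_rw [add_pow, mul_pow]
  exact integrable_finsetSum _ fun ℓ _ =>
    (((integrable_gaussianLikelihoodRatio_pow hv m ℓ).const_mul _).mul_const _).mul_const _

theorem integral_sparsifiedLikelihoodRatio_pow (hv : v ≠ 0) (γ m : ℝ) (α : ℕ) :
    ∫ x, (γ * gaussianLikelihoodRatio v m x + (1 - γ)) ^ α ∂gaussianReal 0 v =
      sparsifiedGaussianMoment v γ α (m ^ 2) := by
  simp_rw [add_pow, mul_pow]
  rw [integral_finsetSum _ fun ℓ _ =>
    (((integrable_gaussianLikelihoodRatio_pow hv m ℓ).const_mul _).mul_const _).mul_const _]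
  refine sum_congr rfl fun ℓ _ => ?_
  rw [integral_mul_const, integral_mul_const, integral_const_mul,
    integral_gaussianLikelihoodRatio_pow hv]
  ring

theorem lintegral_sparsifiedLikelihoodRatio_pow (hv : v ≠ 0) {γ : ℝ} (hγ0 : 0 ≤ γ)
    (hγ1 : γ ≤ 1) (m : ℝ) (α : ℕ) :
    ∫⁻ x, ENNReal.ofReal (γ * gaussianLikelihoodRatio v m x + (1 - γ)) ^ α ∂gaussianReal 0 v =
      ENNReal.ofReal (sparsifiedGaussianMoment v γ α (m ^ 2)) := by
  have hnonneg (x : ℝ) : 0 ≤ γ * gaussianLikelihoodRatio v m x + (1 - γ) := by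
    unfold gaussianLikelihoodRatio
    have : 0 ≤ 1 - γ := by linarith
    positivity
  simp_rw [← ENNReal.ofReal_pow (hnonneg _)]
  rw [← ofReal_integral_eq_lintegral_ofReal (integrable_sparsifiedLikelihoodRatio_pow hv γ m α)
    (ae_of_all _ fun x => pow_nonneg (hnonneg x) α), integral_sparsifiedLikelihoodRatio_pow hv]

end Gaussian

theorem renyi_div_sparsified_gaussian_product_le_general
    (σ γ Δ₂ Δinf : ℝ) (hσ : 0 < σ) (hγ0 : 0 ≤ γ) (hγ1 : γ ≤ 1)
    (hΔinf : 0 < Δinf)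
    (α : ℕ) (hα : 2 ≤ α)
    (d : ℕ) (g : Fin d → ℝ)
    (hg2 : Real.sqrt (∑ j, g j ^ 2) ≤ Δ₂)
    (hginf : ∀ j, |g j| ≤ Δinf) :
    renyiDiv (α : ℝ)
      (Measure.pi fun j =>
        ENNReal.ofReal γ • gaussianReal (g j) (Real.toNNReal (σ ^ 2)) +
          ENNReal.ofReal (1 - γ) • gaussianReal 0 (Real.toNNReal (σ ^ 2)))
      (Measure.pi fun _ => gaussianReal 0 (Real.toNNReal (σ ^ 2))) ≤
    (((Δ₂ ^ 2 / Δinf ^ 2) / ((α : ℝ) - 1) * Real.log (∑ ℓ ∈ Finset.range (α + 1),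
        (α.choose ℓ : ℝ) * (1 - γ) ^ (α - ℓ) * γ ^ ℓ *
          Real.exp ((ℓ : ℝ) * ((ℓ : ℝ) - 1) * Δinf ^ 2 / (2 * σ ^ 2))) : ℝ) : EReal) := by
  have hv : (σ ^ 2).toNNReal ≠ 0 := by simpa using hσ.ne'
  have hvσ : ((σ ^ 2).toNNReal : ℝ) = σ ^ 2 := Real.coe_toNNReal _ (sq_nonneg σ)
  have hα1 : 0 ≤ ((α : ℝ) - 1)⁻¹ := by
    have : (2 : ℝ) ≤ α := mod_cast hα
    exact inv_nonneg.2 (by linarith)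
  have hM (j : Fin d) := one_le_sparsifiedGaussianMoment (α := α) hγ0 hγ1 (sq_nonneg σ)
    (sq_nonneg (g j))
  simp only [mixture_gaussianReal_eq_withDensity hv hγ0 hγ1]
  rw [Measure.pi_withDensity (fun j => by fun_prop), renyiDiv_withDensity _ _ (by fun_prop)]
  simp_rw [ENNReal.rpow_natCast, ← prod_pow]
  rw [lintegral_pi_prod_eq_prod (f := fun j x =>
    ENNReal.ofReal (γ * gaussianLikelihoodRatio _ (g j) x + (1 - γ)) ^ α) (fun j => by fun_prop)]
  simp_rw [lintegral_sparsifiedLikelihoodRatio_pow hv hγ0 hγ1, hvσ]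
  rw [← ENNReal.ofReal_prod_of_nonneg fun j _ => zero_le_one.trans (hM j),
    ENNReal.log_ofReal_of_pos (prod_pos fun j _ => one_pos.trans_le (hM j)), ← EReal.coe_mul,
    EReal.coe_le_coe_iff]
  calc ((α : ℝ) - 1)⁻¹ * log (∏ j, sparsifiedGaussianMoment (σ ^ 2) γ α (g j ^ 2))
      ≤ ((α : ℝ) - 1)⁻¹ * (Δ₂ ^ 2 / Δinf ^ 2 *
          log (sparsifiedGaussianMoment (σ ^ 2) γ α (Δinf ^ 2))) :=
        mul_le_mul_of_nonneg_left (log_prod_sparsifiedGaussianMoment_le hγ0 hγ1 (sq_nonneg σ)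
          hΔinf hginf (Real.sqrt_le_iff.1 hg2).2) hα1
    _ = _ := by rw [sparsifiedGaussianMoment]; ring

theorem renyi_div_sparsified_gaussian_product_le
    (σ γ Δ₂ Δinf : ℝ) (hσ : 0 < σ) (hγ0 : 0 ≤ γ) (hγ1 : γ ≤ 1)
    (hΔinf : 0 < Δinf) (hΔ : Δinf ≤ Δ₂)
    (α : ℕ) (hα : 2 ≤ α)
    (d : ℕ) (g : Fin d → ℝ)
    (hg2 : Real.sqrt (∑ j, g j ^ 2) ≤ Δ₂)
    (hginf : ∀ j, |g j| ≤ Δinf) :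
    renyiDiv (α : ℝ)
      (Measure.pi fun j =>
        ENNReal.ofReal γ • gaussianReal (g j) (Real.toNNReal (σ ^ 2)) +
          ENNReal.ofReal (1 - γ) • gaussianReal 0 (Real.toNNReal (σ ^ 2)))
      (Measure.pi fun _ => gaussianReal 0 (Real.toNNReal (σ ^ 2))) ≤
    (((Δ₂ ^ 2 / Δinf ^ 2) / ((α : ℝ) - 1) * Real.log (∑ ℓ ∈ Finset.range (α + 1),
        (α.choose ℓ : ℝ) * (1 - γ) ^ (α - ℓ) * γ ^ ℓ *
          Real.exp ((ℓ : ℝ) * ((ℓ : ℝ) - 1) * Δinf ^ 2 / (2 * σ ^ 2))) : ℝ) : EReal) :=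
  renyi_div_sparsified_gaussian_product_le_general σ γ Δ₂ Δinf hσ hγ0 hγ1 hΔinf α hα d g hg2 hginf
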